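/- For a one-qubit error with the normal distribution with parameter σ, the variance of the disturbed state is V(Ψ) = 2 - 2σ. -/

import Mathlib

open Real

/-! With `D θ = 1 + σ² - 2σ cos θ`, integrating by parts against `sin θ / D² = (2σ)⁻¹ (-1/D)'`
turns `∫₀^π cos θ sin² θ / D²` into a Poisson-kernel integral of `cos 2θ / D`. Its primitive involves
`arctan (σ sin θ / (1 - σ cos θ))`, which is smooth on all of `ℝ` (as `1 - σ cos θ > 0`) and vanishes
at `0` and `π`, so only the linear term contributes: the integral is `πσ / (2(1 - σ²))`, and
`2 - 8π · (1 - σ²)/(2π²) · πσ/(2(1 - σ²)) = 2 - 2σ`. -/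

lemma one_sub_mul_cos_pos {σ : ℝ} (hσ : |σ| < 1) (θ : ℝ) : 0 < 1 - σ * cos θ := by
  have : |σ * cos θ| < 1 := by
    rw [abs_mul]
    exact lt_of_le_of_lt (mul_le_of_le_one_right (abs_nonneg σ) (abs_cos_le_one θ)) hσ
  linarith [le_abs_self (σ * cos θ)]

lemma one_add_sq_sub_two_mul_cos_pos {σ : ℝ} (hσ : |σ| < 1) (θ : ℝ) :
    0 < 1 + σ ^ 2 - 2 * σ * cos θ := by
  have := one_sub_mul_cos_pos hσ θ
  nlinarith [sin_sq_add_cos_sq θ, sq_nonneg (σ * sin θ)]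

lemma hasDerivAt_arctan_mul_sin_div {σ θ : ℝ} (h : 1 - σ * cos θ ≠ 0) :
    HasDerivAt (fun t => arctan (σ * sin t / (1 - σ * cos t)))
      ((σ * cos θ - σ ^ 2) / (1 + σ ^ 2 - 2 * σ * cos θ)) θ := by
  have hden : HasDerivAt (fun t => 1 - σ * cos t) (σ * sin θ) θ := by
    simpa using ((hasDerivAt_cos θ).const_mul σ).const_sub 1
  have hquot : HasDerivAt (fun t => σ * sin t / (1 - σ * cos t))
      ((σ * cos θ * (1 - σ * cos θ) - σ * sin θ * (σ * sin θ)) / (1 - σ * cos θ) ^ 2) θ :=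
    ((hasDerivAt_sin θ).const_mul σ).div hden h
  have hsum : (1 - σ * cos θ) ^ 2 + σ ^ 2 * sin θ ^ 2 = 1 + σ ^ 2 - 2 * σ * cos θ := by
    linear_combination σ ^ 2 * sin_sq_add_cos_sq θ
  have hD : 1 + σ ^ 2 - 2 * σ * cos θ ≠ 0 := hsum ▸ by positivity
  have hsq : 1 + (σ * sin θ / (1 - σ * cos θ)) ^ 2
      = (1 + σ ^ 2 - 2 * σ * cos θ) / (1 - σ * cos θ) ^ 2 := by
    rw [← hsum]; field_simp
  have hnum : σ * cos θ * (1 - σ * cos θ) - σ * sin θ * (σ * sin θ) = σ * cos θ - σ ^ 2 := by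
    linear_combination -σ ^ 2 * sin_sq_add_cos_sq θ
  refine hquot.arctan.congr_deriv ?_
  rw [hsq, hnum]
  field_simp

lemma hasDerivAt_primitive_cos_mul_sin_sq_div_sq {σ : ℝ} (hσ : |σ| < 1) (hσ0 : σ ≠ 0) (θ : ℝ) :
    HasDerivAt (fun t => σ * t / (2 * (1 - σ ^ 2))
        + (1 + σ ^ 4) / (2 * σ ^ 3 * (1 - σ ^ 2)) * arctan (σ * sin t / (1 - σ * cos t))
        - sin t * (1 + σ ^ 2 - σ * cos t) / (1 + σ ^ 2 - 2 * σ * cos t) / (2 * σ ^ 2))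
      (cos θ * sin θ ^ 2 / (1 + σ ^ 2 - 2 * σ * cos θ) ^ 2) θ := by
  have hD := (one_add_sq_sub_two_mul_cos_pos hσ θ).ne'
  have hc := (one_sub_mul_cos_pos hσ θ).ne'
  have hσ2 : 1 - σ ^ 2 ≠ 0 := sub_ne_zero.mpr ((sq_lt_one_iff_abs_lt_one σ).mpr hσ).ne'
  have hN : HasDerivAt (fun t => 1 + σ ^ 2 - σ * cos t) (σ * sin θ) θ := by
    simpa using ((hasDerivAt_cos θ).const_mul σ).const_sub (1 + σ ^ 2)
  have hDer : HasDerivAt (fun t => 1 + σ ^ 2 - 2 * σ * cos t) (2 * σ * sin θ) θ := by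
    simpa using ((hasDerivAt_cos θ).const_mul (2 * σ)).const_sub (1 + σ ^ 2)
  have hR : HasDerivAt (fun t => sin t * (1 + σ ^ 2 - σ * cos t) / (1 + σ ^ 2 - 2 * σ * cos t))
      (((cos θ * (1 + σ ^ 2 - σ * cos θ) + sin θ * (σ * sin θ)) * (1 + σ ^ 2 - 2 * σ * cos θ)
        - sin θ * (1 + σ ^ 2 - σ * cos θ) * (2 * σ * sin θ)) / (1 + σ ^ 2 - 2 * σ * cos θ) ^ 2) θ :=
    ((hasDerivAt_sin θ).mul hN).div hDer hD
  refine ((((hasDerivAt_id' θ).const_mul σ).div_const _).add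
    ((hasDerivAt_arctan_mul_sin_div hc).const_mul _)).sub
    (hR.div_const _) |>.congr_deriv ?_
  -- abstracting `D` stops `field_simp` from renormalising it out of reach of `hD`
  set D := 1 + σ ^ 2 - 2 * σ * cos θ with hD_def
  field_simp
  rw [sin_sq, hD_def]
  ring

lemma integral_cos_mul_sin_sq_div_sq {σ : ℝ} (hσ : |σ| < 1) :
    ∫ θ in (0 : ℝ)..π, cos θ * sin θ ^ 2 / (1 + σ ^ 2 - 2 * σ * cos θ) ^ 2
      = π * σ / (2 * (1 - σ ^ 2)) := by
  rcases eq_or_ne σ 0 with rfl | hσ0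
  · simpa [mul_comm] using integral_sin_sq_mul_cos (a := 0) (b := π)
  have hcont : Continuous fun θ => cos θ * sin θ ^ 2 / (1 + σ ^ 2 - 2 * σ * cos θ) ^ 2 := by
    fun_prop (disch := exact fun θ => (pow_pos (one_add_sq_sub_two_mul_cos_pos hσ θ) 2).ne')
  rw [intervalIntegral.integral_eq_sub_of_hasDerivAt
    (fun θ _ => hasDerivAt_primitive_cos_mul_sin_sq_div_sq hσ hσ0 θ) (hcont.intervalIntegrable _ _)]
  simp only [sin_pi, mul_zero, cos_pi, mul_neg, mul_one, sub_neg_eq_add, zero_div, arctan_zero,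
    add_zero, zero_mul, sub_zero, sin_zero, cos_zero, sub_self]
  ring

theorem variance_normal_one_qubit (σ : ℝ) (hσ : σ ∈ Set.Ico (0:ℝ) 1) :
    2 - 8 * π * ∫ θ₀ in (0:ℝ)..π,
        ((1 / (2 * π ^ 2)) * (1 - σ ^ 2) / (1 + σ ^ 2 - 2 * σ * Real.cos θ₀) ^ 2) *
          Real.cos θ₀ * Real.sin θ₀ ^ 2 = 2 - 2 * σ := by
  have hσ' : |σ| < 1 := abs_lt.mpr ⟨by linarith [hσ.1], hσ.2⟩
  have hσ2 : 1 - σ ^ 2 ≠ 0 := sub_ne_zero.mpr ((sq_lt_one_iff_abs_lt_one σ).mpr hσ').ne'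
  have hintegrand : ∀ θ₀,
      (1 / (2 * π ^ 2)) * (1 - σ ^ 2) / (1 + σ ^ 2 - 2 * σ * cos θ₀) ^ 2 * cos θ₀ * sin θ₀ ^ 2
        = (1 - σ ^ 2) / (2 * π ^ 2) * (cos θ₀ * sin θ₀ ^ 2 / (1 + σ ^ 2 - 2 * σ * cos θ₀) ^ 2) :=
    fun θ₀ => by ring
  simp only [hintegrand, intervalIntegral.integral_const_mul, integral_cos_mul_sin_sq_div_sq hσ']
  field_simp
  ring
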